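/- Let m ≥ 1 and k ≥ 4 be integers and let q ∈ (1,2) satisfy |q − q_k| < q_k^{−(m+2)k−3}. For 0 ≤ i ≤ m define L_i(q) = g_{q,k}^i(1) and R_i(q) = g_{q,k}^i(1 + q^{−(m−i)k} π_q(0^{k−3}(01^{k−1})^∞)), and define L_Q(q) = g_{q,k}^m(π_q(1^{k−3}(10^{k−1})^∞)) and R_Q(q) = g_{q,k}^m(1/(q−1)). Then: (a) if q < q_k, then L_Q(q) < L_0(q) < ⋯ < L_m(q) < R_Q(q) < R_0(q) < ⋯ < R_m(q); (b) if q = q_k, then L_Q(q) < L_0(q) = ⋯ = L_m(q) < R_Q(q) < R_0(q) = ⋯ = R_m(q); (c) if q > q_k, then L_Q(q) < L_m(q) < ⋯ < L_0(q) < R_Q(q) < R_m(q) < ⋯ < R_0(q). -/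

import Mathlib

open Set

/-- Projection map: the value of the (0-indexed) digit sequence `a` in base `q`,
`π_q(a) = Σ_{j=0}^∞ a_j q^{-(j+1)}`. -/
noncomputable def piQ (q : ℝ) (a : ℕ → ℝ) : ℝ := ∑' j : ℕ, a j / q ^ (j + 1)

/-- `a` is a sequence of digits in `{0,1}`. -/
def IsDigitSeq (a : ℕ → ℝ) : Prop := ∀ j, a j = 0 ∨ a j = 1

/-- `a` is a sequence of digits in `{-1,0,1}`. -/
def IsExtDigitSeq (a : ℕ → ℝ) : Prop := ∀ j, a j = -1 ∨ a j = 0 ∨ a j = 1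

/-- The set of base-`q` expansions of `x`. -/
def SigmaSet (q x : ℝ) : Set (ℕ → ℝ) := {a | IsDigitSeq a ∧ piQ q a = x}

/-- The interval `I_q = [0, 1/(q-1)]`. -/
def Iq (q : ℝ) : Set ℝ := Set.Icc 0 (1 / (q - 1))

/-- The switch region `J_q = [1/q, 1/(q(q-1))]`. -/
def Jq (q : ℝ) : Set ℝ := Set.Icc (1 / q) (1 / (q * (q - 1)))

/-- The set of points of `I_q` having exactly `m` base-`q` expansions. -/
def UqM (q : ℝ) (m : ℕ∞) : Set ℝ := {x | x ∈ Iq q ∧ (SigmaSet q x).encard = m}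

/-- The set of points of `I_q` having a unique base-`q` expansion. -/
def Uq (q : ℝ) : Set ℝ := UqM q 1

/-- `B_m`: the set of bases `q ∈ (1,2)` for which some point has exactly `m` expansions. -/
def Bset (m : ℕ∞) : Set ℝ := {q | q ∈ Set.Ioo (1 : ℝ) 2 ∧ (UqM q m).Nonempty}

/-- `x` is the `k`-Bonacci number: the root in `(1,2)` of `x^k = x^{k-1} + ⋯ + x + 1`. -/
def IsBonacci (k : ℕ) (x : ℝ) : Prop :=
  x ∈ Set.Ioo (1 : ℝ) 2 ∧ x ^ k = ∑ i ∈ Finset.range k, x ^ i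

/-- `a` contains no occurrence of the word `01^k` as a consecutive block. -/
def AvoidsWord01 (k : ℕ) (a : ℕ → ℝ) : Prop :=
  ∀ i, ¬(a i = 0 ∧ ∀ j, 1 ≤ j → j ≤ k → a (i + j) = 1)

/-- `a` contains no occurrence of the word `10^k` as a consecutive block. -/
def AvoidsWord10 (k : ℕ) (a : ℕ → ℝ) : Prop :=
  ∀ i, ¬(a i = 1 ∧ ∀ j, 1 ≤ j → j ≤ k → a (i + j) = 0)

/-- `S_k`: the set of `{0,1}`-sequences avoiding the words `01^k` and `10^k`. -/
def Sset (k : ℕ) : Set (ℕ → ℝ) := {a | IsDigitSeq a ∧ AvoidsWord01 k a ∧ AvoidsWord10 k a}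

/-- `g_{q,k} = f_1^{-(k-1)} ∘ f_0^{-1}`, where `f_0^{-1}(y) = y/q` and `f_1^{-1}(y) = (y+1)/q`. -/
noncomputable def gMap (q : ℝ) (k : ℕ) (x : ℝ) : ℝ := (fun y => (y + 1) / q)^[k - 1] (x / q)

/-- The maps `f_0(x) = qx` (for `b = false`) and `f_1(x) = qx - 1` (for `b = true`). -/
noncomputable def fDigit (q : ℝ) (b : Bool) (x : ℝ) : ℝ := if b then q * x - 1 else q * x

/-- `(a, b)` is a bounded gap of `C`: a bounded connected component of `ℝ \ C`. -/
def IsGap (C : Set ℝ) (a b : ℝ) : Prop :=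
  a < b ∧ a ∈ C ∧ b ∈ C ∧ Set.Ioo a b ∩ C = ∅

/-- The left endpoint of the bridge of `C` lying immediately to the left of the gap `(a, b)`:
the right endpoint of the nearest gap to the left having diameter at least `b - a`
(or `min C` if there is no such gap). -/
noncomputable def leftBridgeStart (C : Set ℝ) (a b : ℝ) : ℝ :=
  sSup ({sInf C} ∪ {d | ∃ c, IsGap C c d ∧ d ≤ a ∧ b - a ≤ d - c})

/-- The right endpoint of the bridge of `C` lying immediately to the right of the gap `(a, b)`. -/
noncomputable def rightBridgeEnd (C : Set ℝ) (a b : ℝ) : ℝ :=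
  sInf ({sSup C} ∪ {c | ∃ d, IsGap C c d ∧ b ≤ c ∧ b - a ≤ d - c})

/-- The (Newhouse) thickness of a compact set `C ⊆ ℝ`: the infimum over all bounded gaps `G`
of the ratio of the length of the bridge on either side of `G` to the length of `G`
(`∞` if `C` has no bounded gap). -/
noncomputable def thickness (C : Set ℝ) : ENNReal :=
  ⨅ p : {p : ℝ × ℝ // IsGap C p.1 p.2},
    ENNReal.ofReal
      (min ((p.1.1 - leftBridgeStart C p.1.1 p.1.2) / (p.1.2 - p.1.1))
        ((rightBridgeEnd C p.1.1 p.1.2 - p.1.2) / (p.1.2 - p.1.1)))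

/-- `B` is contained in a gap of `A`, i.e. in a connected component of `ℝ \ A`. -/
def ContainedInGap (B A : Set ℝ) : Prop :=
  ∃ x ∈ Aᶜ, B ⊆ connectedComponentIn Aᶜ x

/-- Two sets are interleaved if neither is contained in a gap of the other. -/
def Interleaved (A B : Set ℝ) : Prop :=
  ¬ContainedInGap B A ∧ ¬ContainedInGap A B

/-- `A` and `B` are `ε`-strongly interleaved: any compact sets within Hausdorff distance `ε`
of `A` and `B` respectively are interleaved. -/
def StronglyInterleaved (ε : ℝ) (A B : Set ℝ) : Prop :=
  ∀ A' B' : Set ℝ, IsCompact A' → IsCompact B' →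
    EMetric.hausdorffEdist A A' ≤ ENNReal.ofReal ε →
    EMetric.hausdorffEdist B B' ≤ ENNReal.ofReal ε → Interleaved A' B'

/-- The sequence `0^{k-3}(01^{k-1})^∞` (0-indexed). -/
noncomputable def seqG (k : ℕ) : ℕ → ℝ := fun j =>
  if j < k - 3 then 0 else if (j - (k - 3)) % k = 0 then 0 else 1

/-- The sequence `1^{k-3}(10^{k-1})^∞` (0-indexed). -/
noncomputable def seqH (k : ℕ) : ℕ → ℝ := fun j =>
  if j < k - 3 then 1 else if (j - (k - 3)) % k = 0 then 1 else 0

/-- The sequence `(1^{k-1}0)^∞` (0-indexed). -/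
noncomputable def seqP (k : ℕ) : ℕ → ℝ := fun j => if j % k = k - 1 then 0 else 1

open Finset

/-!
Write `λ = q⁻ᵏ`, `e = π_q(1ᵏ0^∞) - 1 = g_{q,k}(1) - 1`, `G = π_q(seqG k)` and `H = π_q(seqH k)`.
Since `g_{q,k}` is affine with slope `λ`, every endpoint is read off the orbit `Lᵢ = gⁱ(1)`:
`L_{i+1} - Lᵢ = λⁱ e`, `Rᵢ - Lᵢ = λᵐ G`, `L_Q - L_m = λᵐ (H - 1)`, `R_Q - L_m = λᵐ (1/(q-1) - 1)`,
and `G + H = 1/(q-1)` because the two digit sequences are complementary.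
The sign of `e` is the sign of `q_k - q`; it orders the `Lᵢ` and the `Rᵢ`. The comparisons
across the families reduce to `H ≤ π_q(1^{k-1}0^∞) = 1 + e - λ` and
`|e| (1 + λ + ⋯ + λᵐ) < λ^{m+1}`. For the latter, `e (q - 1) = (q_k - q) + (q_k⁻ᵏ - q⁻ᵏ)` has
summands of opposite signs, so `|e| (q - 1) ≤ |q - q_k|`, and the closeness hypothesis beats
`λ^{m+1} ≈ q_k^{-(m+1)k}` by the spare factor `q_k^{-(k+3)}`.
-/

-- `π_q(1ᵏ0^∞) - 1`
noncomputable def bonacciDefect (k : ℕ) (q : ℝ) : ℝ := ∑ i ∈ range k, q⁻¹ ^ (i + 1) - 1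

theorem iterate_sub_iterate_of_sub {R : Type*} [CommRing R] {f : R → R} {a : R}
    (hf : ∀ x y, f x - f y = a * (x - y)) (n : ℕ) (x y : R) :
    f^[n] x - f^[n] y = a ^ n * (x - y) := by
  induction n generalizing x y with
  | zero => simp
  | succ n ih =>
    rw [Function.iterate_succ_apply, Function.iterate_succ_apply, ih, hf, pow_succ, mul_assoc]

section gMap

variable {q : ℝ} {k : ℕ}

theorem iterate_add_one_div_zero (q : ℝ) (n : ℕ) :
    (fun y => (y + 1) / q)^[n] 0 = ∑ i ∈ range n, q⁻¹ ^ (i + 1) := by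
  induction n with
  | zero => simp
  | succ n ih =>
    rw [Function.iterate_succ_apply', ih, sum_range_succ', div_eq_mul_inv, add_mul, sum_mul]
    simp [pow_succ]

theorem gMap_sub_gMap (hk : 1 ≤ k) (x y : ℝ) :
    gMap q k x - gMap q k y = (q ^ k)⁻¹ * (x - y) := by
  obtain ⟨j, rfl⟩ : ∃ j, k = j + 1 := ⟨k - 1, by omega⟩
  rw [gMap, gMap, iterate_sub_iterate_of_sub (a := q⁻¹) (fun x y => by ring)]
  simp only [add_tsub_cancel_right, pow_succ]
  ring

theorem iterate_gMap_sub (hk : 1 ≤ k) (n : ℕ) (x y : ℝ) :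
    (gMap q k)^[n] x - (gMap q k)^[n] y = (q ^ k)⁻¹ ^ n * (x - y) :=
  iterate_sub_iterate_of_sub (gMap_sub_gMap hk) n x y

theorem gMap_one (hk : 1 ≤ k) : gMap q k 1 = 1 + bonacciDefect k q := by
  obtain ⟨j, rfl⟩ : ∃ j, k = j + 1 := ⟨k - 1, by omega⟩
  have h0 : gMap q (j + 1) 0 = ∑ i ∈ range j, q⁻¹ ^ (i + 1) := by
    simp [gMap, iterate_add_one_div_zero]
  have h := gMap_sub_gMap (q := q) hk 1 0
  rw [h0, ← inv_pow] at h
  rw [bonacciDefect, sum_range_succ]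
  linarith

theorem iterate_gMap_succ_one_sub (hk : 1 ≤ k) (i : ℕ) :
    (gMap q k)^[i + 1] 1 - (gMap q k)^[i] 1 = (q ^ k)⁻¹ ^ i * bonacciDefect k q := by
  rw [Function.iterate_succ_apply, iterate_gMap_sub hk, gMap_one hk, add_sub_cancel_left]

theorem iterate_gMap_add_zpow_mul (hq : q ≠ 0) (hk : 1 ≤ k) (m i : ℕ) (x y : ℝ) :
    (gMap q k)^[i] (x + q ^ (-(((m : ℤ) - (i : ℤ)) * (k : ℤ))) * y) =
      (gMap q k)^[i] x + (q ^ k)⁻¹ ^ m * y := by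
  have h := iterate_gMap_sub (q := q) hk i (x + q ^ (-(((m : ℤ) - (i : ℤ)) * (k : ℤ))) * y) x
  have hpow : (q ^ k)⁻¹ ^ i * q ^ (-(((m : ℤ) - (i : ℤ)) * (k : ℤ))) = (q ^ k)⁻¹ ^ m := by
    simp only [← zpow_natCast, ← zpow_neg, ← zpow_mul, ← zpow_add₀ hq]
    congr 1; ring
  rw [add_sub_cancel_left, ← mul_assoc, hpow] at h
  linarith

end gMap

section defect

variable {q qk : ℝ} {k : ℕ}

theorem sum_inv_pow_succ_mul_sub_one (hq : q ≠ 0) (n : ℕ) :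
    (∑ i ∈ range n, q⁻¹ ^ (i + 1)) * (q - 1) = 1 - q⁻¹ ^ n := by
  have hterm : ∀ i : ℕ, q⁻¹ ^ (i + 1) * (q - 1) = q⁻¹ ^ i - q⁻¹ ^ (i + 1) := fun i => by
    rw [pow_succ]; field_simp
  rw [sum_mul, sum_congr rfl fun i _ => hterm i, sum_range_sub', pow_zero]

theorem bonacciDefect_mul_sub_one (hq : q ≠ 0) :
    bonacciDefect k q * (q - 1) = 2 - q - (q ^ k)⁻¹ := by
  rw [bonacciDefect, sub_mul, sum_inv_pow_succ_mul_sub_one hq, inv_pow]; ring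

theorem IsBonacci.inv_pow_eq (h : IsBonacci k qk) : (qk ^ k)⁻¹ = 2 - qk := by
  obtain ⟨-, hsum⟩ := h
  have hgeom := geom_sum_mul qk k
  rw [← hsum] at hgeom
  exact inv_eq_of_mul_eq_one_right (by linear_combination -hgeom)

theorem IsBonacci.bonacciDefect_eq_zero (h : IsBonacci k qk) : bonacciDefect k qk = 0 := by
  have hqk : 1 < qk := h.1.1
  have hmul := bonacciDefect_mul_sub_one (k := k) (by positivity : qk ≠ 0)
  rw [h.inv_pow_eq, sub_self] at hmul
  exact (mul_eq_zero.1 hmul).resolve_right (by linarith)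

theorem bonacciDefect_strictAntiOn (hk : 1 ≤ k) :
    StrictAntiOn (bonacciDefect k) (Set.Ioi 0) := by
  intro a ha b _ hab
  simp only [bonacciDefect, sub_lt_sub_iff_right]
  refine sum_lt_sum_of_nonempty (nonempty_range_iff.2 (by omega)) fun i _ => ?_
  exact pow_lt_pow_left₀ (inv_strictAnti₀ ha hab) (inv_pos.2 (lt_trans ha hab)).le (by omega)

theorem IsBonacci.bonacciDefect_pos (h : IsBonacci k qk) (hk : 1 ≤ k) (hq : 0 < q)
    (hlt : q < qk) : 0 < bonacciDefect k q :=
  h.bonacciDefect_eq_zero ▸ bonacciDefect_strictAntiOn hk hq (hq.trans hlt) hlt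

theorem IsBonacci.bonacciDefect_neg (h : IsBonacci k qk) (hk : 1 ≤ k) (hlt : qk < q) :
    bonacciDefect k q < 0 := by
  have hqk : 0 < qk := by linarith [h.1.1]
  exact h.bonacciDefect_eq_zero ▸ bonacciDefect_strictAntiOn hk hqk (hqk.trans hlt) hlt

theorem inv_pow_add_bonacciDefect_le (hq1 : 1 < q) (hq2 : q ≤ 2) :
    (q ^ k)⁻¹ + bonacciDefect k q ≤ 1 / (q - 1) - 1 := by
  have hmul := bonacciDefect_mul_sub_one (k := k) (by linarith : q ≠ 0)
  have hlam : 0 < (q ^ k)⁻¹ := by positivity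
  rw [le_sub_iff_add_le, le_div_iff₀ (by linarith)]
  nlinarith

theorem IsBonacci.abs_bonacciDefect_mul_le (h : IsBonacci k qk) (hk : 1 ≤ k) (hq : 0 < q) :
    |bonacciDefect k q| * (q - 1) ≤ |q - qk| := by
  have hqk : 0 < qk := by linarith [h.1.1]
  have hdiff : bonacciDefect k q * (q - 1) = (qk - q) + ((qk ^ k)⁻¹ - (q ^ k)⁻¹) := by
    rw [bonacciDefect_mul_sub_one hq.ne', h.inv_pow_eq]; ring
  rcases lt_trichotomy q qk with hlt | rfl | hgt
  · have he := h.bonacciDefect_pos hk hq hlt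
    have hpow : (qk ^ k)⁻¹ < (q ^ k)⁻¹ :=
      inv_strictAnti₀ (by positivity) (pow_lt_pow_left₀ hlt hq.le (by omega))
    rw [abs_of_pos he, abs_of_neg (by linarith)]
    linarith
  · simp [h.bonacciDefect_eq_zero]
  · have he := h.bonacciDefect_neg hk hgt
    have hpow : (q ^ k)⁻¹ < (qk ^ k)⁻¹ :=
      inv_strictAnti₀ (by positivity) (pow_lt_pow_left₀ hgt hqk.le (by omega))
    rw [abs_of_neg he, abs_of_pos (by linarith)]
    linarith

theorem IsBonacci.five_thirds_lt (h : IsBonacci k qk) (hk : 4 ≤ k) : 5 / 3 < qk := by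
  have hqk : 0 < qk := by linarith [h.1.1]
  have hsum := h.bonacciDefect_eq_zero
  rw [bonacciDefect, sub_eq_zero] at hsum
  have hsub : ∑ i ∈ range 4, qk⁻¹ ^ (i + 1) ≤ 1 :=
    hsum ▸ sum_le_sum_of_subset_of_nonneg (range_subset_range.2 hk) fun _ _ _ => by positivity
  simp only [sum_range_succ, sum_range_zero] at hsub
  by_contra! hle
  have ht : 3 / 5 ≤ qk⁻¹ := by simpa using inv_anti₀ hqk hle
  nlinarith [pow_le_pow_left₀ (by norm_num) ht 2, pow_le_pow_left₀ (by norm_num) ht 3,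
    pow_le_pow_left₀ (by norm_num) ht 4]

end defect

section piQ

variable {q : ℝ} {a b : ℕ → ℝ}

theorem hasSum_inv_pow_succ (hq : 1 < q) :
    HasSum (fun j : ℕ => 1 / q ^ (j + 1)) (1 / (q - 1)) := by
  have hq0 : 0 < q := by linarith
  have h := (hasSum_geometric_of_lt_one (inv_nonneg.2 hq0.le)
    (inv_lt_one_of_one_lt₀ hq)).mul_left q⁻¹
  have hterm : (fun j : ℕ => 1 / q ^ (j + 1)) = fun j => q⁻¹ * q⁻¹ ^ j := by
    funext j; rw [one_div, ← inv_pow, pow_succ']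
  have hsum : 1 / (q - 1) = q⁻¹ * (1 - q⁻¹)⁻¹ := by field_simp
  rwa [hterm, hsum]

theorem summable_piQ (hq : 1 < q) (ha : ∀ j, a j ∈ Set.Icc (0 : ℝ) 1) :
    Summable fun j => a j / q ^ (j + 1) :=
  (hasSum_inv_pow_succ hq).summable.of_nonneg_of_le
    (fun j => div_nonneg (ha j).1 (by positivity))
    (fun j => div_le_div_of_nonneg_right (ha j).2 (by positivity))

theorem piQ_one (hq : 1 < q) : piQ q (fun _ => 1) = 1 / (q - 1) :=
  (hasSum_inv_pow_succ hq).tsum_eq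

theorem piQ_le (hq : 1 < q) (ha : ∀ j, a j ∈ Set.Icc (0 : ℝ) 1) : piQ q a ≤ 1 / (q - 1) :=
  piQ_one hq ▸ (summable_piQ hq ha).tsum_le_tsum
    (fun j => div_le_div_of_nonneg_right (ha j).2 (by positivity))
    (hasSum_inv_pow_succ hq).summable

theorem piQ_add (hq : 1 < q) (ha : ∀ j, a j ∈ Set.Icc (0 : ℝ) 1)
    (hb : ∀ j, b j ∈ Set.Icc (0 : ℝ) 1) : piQ q (a + b) = piQ q a + piQ q b := by
  simp only [piQ, Pi.add_apply, add_div]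
  exact (summable_piQ hq ha).tsum_add (summable_piQ hq hb)

theorem piQ_eq_sum_add (hq : 1 < q) (ha : ∀ j, a j ∈ Set.Icc (0 : ℝ) 1) (n : ℕ) :
    piQ q a = ∑ j ∈ range n, a j / q ^ (j + 1) + piQ q (fun j => a (j + n)) / q ^ n := by
  rw [piQ, ← (summable_piQ hq ha).sum_add_tsum_nat_add n, piQ, ← tsum_div_const]
  congr 1
  refine tsum_congr fun j => ?_
  rw [div_div, ← pow_add]
  ring_nf

end piQ

section seq

variable {q : ℝ} {k : ℕ}

theorem seqH_mem_Icc (k j : ℕ) : seqH k j ∈ Set.Icc (0 : ℝ) 1 := by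
  unfold seqH; split_ifs <;> norm_num

theorem seqG_mem_Icc (k j : ℕ) : seqG k j ∈ Set.Icc (0 : ℝ) 1 := by
  unfold seqG; split_ifs <;> norm_num

theorem seqG_add_seqH (k : ℕ) : seqG k + seqH k = fun _ => 1 := by
  funext j; simp only [Pi.add_apply, seqG, seqH]; split_ifs <;> norm_num

theorem piQ_seqG_add_piQ_seqH (hq : 1 < q) :
    piQ q (seqG k) + piQ q (seqH k) = 1 / (q - 1) := by
  rw [← piQ_add hq (seqG_mem_Icc k) (seqH_mem_Icc k), seqG_add_seqH, piQ_one hq]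

theorem seqH_of_lt {j : ℕ} (hj : j < k - 2) : seqH k j = 1 := by
  simp [seqH, show j - (k - 3) = 0 by omega]

theorem seqH_of_le_of_lt {j : ℕ} (hk : 3 ≤ k) (h1 : k - 2 ≤ j) (h2 : j < 2 * k - 3) :
    seqH k j = 0 := by
  rw [seqH, if_neg (by omega), if_neg]
  rw [Nat.mod_eq_of_lt (by omega)]
  omega

theorem sum_seqH_div_pow (hk : 3 ≤ k) :
    ∑ j ∈ range (2 * k - 3), seqH k j / q ^ (j + 1) = ∑ j ∈ range (k - 2), q⁻¹ ^ (j + 1) := by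
  have hgap : ∑ i ∈ range (k - 1), seqH k (k - 2 + i) / q ^ (k - 2 + i + 1) = 0 :=
    sum_eq_zero fun i hi => by
      rw [seqH_of_le_of_lt hk (by omega) (by simp at hi; omega), zero_div]
  rw [show 2 * k - 3 = (k - 2) + (k - 1) by omega, sum_range_add, hgap, add_zero]
  exact sum_congr rfl fun j hj => by rw [seqH_of_lt (by simpa using hj), one_div, inv_pow]

theorem piQ_seqH_le (hk : 4 ≤ k) (hq : 3 / 2 ≤ q) :
    piQ q (seqH k) ≤ 1 + bonacciDefect k q - (q ^ k)⁻¹ := by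
  have hq1 : 1 < q := by linarith
  have hq0 : 0 < q := by linarith
  have htail : 1 / (q - 1) / q ^ (2 * k - 3) ≤ q⁻¹ ^ (k - 1) := by
    have hpow : q ^ 2 ≤ q ^ (k - 2) := pow_le_pow_right₀ hq1.le (by omega)
    have h1 : 1 ≤ (q - 1) * q ^ (k - 2) := by nlinarith
    rw [show 2 * k - 3 = (k - 1) + (k - 2) by omega, pow_add, inv_pow, div_div, one_div]
    apply inv_anti₀ (by positivity)
    calc q ^ (k - 1) = q ^ (k - 1) * 1 := (mul_one _).symm
      _ ≤ q ^ (k - 1) * ((q - 1) * q ^ (k - 2)) := by gcongr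
      _ = (q - 1) * (q ^ (k - 1) * q ^ (k - 2)) := by ring
  have hprefix : 1 + bonacciDefect k q - (q ^ k)⁻¹ =
      ∑ j ∈ range (k - 2), q⁻¹ ^ (j + 1) + q⁻¹ ^ (k - 1) := by
    obtain ⟨j, rfl⟩ : ∃ j, k = j + 2 := ⟨k - 2, by omega⟩
    rw [bonacciDefect, sum_range_succ, sum_range_succ, inv_pow]
    simp only [add_tsub_cancel_right, show j + 2 - 1 = j + 1 by omega]
    ring
  rw [piQ_eq_sum_add hq1 (seqH_mem_Icc k) (2 * k - 3), sum_seqH_div_pow (by omega), hprefix]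
  gcongr
  exact (div_le_div_of_nonneg_right (piQ_le hq1 fun j => seqH_mem_Icc k _)
    (by positivity)).trans htail

end seq

section estimates

theorem one_add_pow_mul_one_sub_le {d : ℝ} (hd0 : 0 ≤ d) (hd1 : d ≤ 1) (n : ℕ) :
    (1 + d) ^ n * (1 - n * d) ≤ 1 :=
  calc (1 + d) ^ n * (1 - n * d) ≤ (1 + d) ^ n * (1 - d) ^ n := by
        gcongr; simpa [sub_eq_add_neg] using one_add_mul_le_pow (a := -d) (by linarith) n
    _ = (1 - d ^ 2) ^ n := by rw [← mul_pow]; ring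
    _ ≤ 1 := pow_le_one₀ (by nlinarith) (by nlinarith)

theorem pow_mul_one_sub_le_of_abs_sub_le {x y d : ℝ} (hy : 1 ≤ y) (hx : 0 ≤ x) (hxy : |x - y| ≤ d)
    (hd1 : d ≤ 1) {n : ℕ} (hnd : n * d ≤ 1) : x ^ n * (1 - n * d) ≤ y ^ n := by
  have hd0 : 0 ≤ d := (abs_nonneg _).trans hxy
  have hx' : x ≤ y * (1 + d) := by nlinarith [le_abs_self (x - y)]
  calc x ^ n * (1 - n * d) ≤ (y * (1 + d)) ^ n * (1 - n * d) := by
        gcongr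
    _ = y ^ n * ((1 + d) ^ n * (1 - n * d)) := by rw [mul_pow, mul_assoc]
    _ ≤ y ^ n * 1 := by gcongr; exact one_add_pow_mul_one_sub_le hd0 hd1 n
    _ = y ^ n := mul_one _

variable {q qk : ℝ} {k : ℕ}

theorem IsBonacci.inv_pow_add_three_lt (h : IsBonacci k qk) (hk : 4 ≤ k) :
    (qk ^ (k + 3))⁻¹ < 1 / 30 :=
  calc (qk ^ (k + 3))⁻¹ ≤ (qk ^ 7)⁻¹ :=
        inv_anti₀ (pow_pos (by linarith [h.1.1]) 7) (pow_le_pow_right₀ h.1.1.le (by omega))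
    _ < ((5 / 3) ^ 7)⁻¹ := inv_strictAnti₀ (by norm_num)
        (pow_lt_pow_left₀ (h.five_thirds_lt hk) (by norm_num) (by norm_num))
    _ < 1 / 30 := by norm_num

theorem IsBonacci.three_halves_le {n : ℕ} (h : IsBonacci k qk) (hk : 4 ≤ k)
    (hclose : |q - qk| < (qk ^ n)⁻¹ * (qk ^ (k + 3))⁻¹) : 3 / 2 ≤ q := by
  have hqk : 0 < qk := by linarith [h.1.1]
  have hd : |q - qk| < 1 / 30 :=
    calc |q - qk| < (qk ^ n)⁻¹ * (qk ^ (k + 3))⁻¹ := hclose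
      _ ≤ (qk ^ (k + 3))⁻¹ :=
          mul_le_of_le_one_left (by positivity) (inv_le_one_of_one_le₀ (one_le_pow₀ h.1.1.le))
      _ < 1 / 30 := h.inv_pow_add_three_lt hk
  linarith [h.five_thirds_lt hk, neg_abs_le (q - qk)]

theorem IsBonacci.abs_bonacciDefect_mul_geom_sum_lt {m : ℕ} (h : IsBonacci k qk) (hk : 4 ≤ k)
    (hq : 3 / 2 ≤ q) (hclose : |q - qk| < (qk ^ ((m + 1) * k))⁻¹ * (qk ^ (k + 3))⁻¹) :
    |bonacciDefect k q| * ∑ j ∈ range (m + 1), (q ^ k)⁻¹ ^ j < (q ^ k)⁻¹ ^ (m + 1) := by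
  set N := (m + 1) * k
  set d := |q - qk|
  set s := (qk ^ (k + 3))⁻¹
  set lam := (q ^ k)⁻¹
  set S := ∑ j ∈ range (m + 1), lam ^ j
  set P := (q - 1) * (1 - lam) * (1 - N * d)
  have hqk := h.five_thirds_lt hk
  have hs : s < 1 / 30 := h.inv_pow_add_three_lt hk
  have hqkN : N * (qk - 1) ≤ qk ^ N := by
    linarith [one_add_mul_sub_le_pow (by linarith : (-1 : ℝ) ≤ qk) N]
  have hdqk : qk ^ N * d < s := (lt_inv_mul_iff₀ (by positivity)).1 hclose
  have hd : d < s := (le_mul_of_one_le_left (abs_nonneg _) (one_le_pow₀ h.1.1.le)).trans_lt hdqk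
  have hNd : N * d ≤ 3 / 2 * s := by
    nlinarith [mul_le_mul_of_nonneg_right hqkN (abs_nonneg (q - qk)), abs_nonneg (q - qk),
      Nat.cast_nonneg (α := ℝ) N]
  have hpow : q ^ N * (1 - N * d) ≤ qk ^ N :=
    pow_mul_one_sub_le_of_abs_sub_le (by linarith) (by linarith) le_rfl (by linarith) (by linarith)
  have hlam : lam ≤ 1 / 5 := by
    calc lam ≤ (q ^ 4)⁻¹ := inv_anti₀ (by positivity) (pow_le_pow_right₀ (by linarith) (by omega))
      _ ≤ ((3 / 2) ^ 4)⁻¹ := inv_anti₀ (by norm_num) (pow_le_pow_left₀ (by norm_num) hq 4)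
      _ ≤ 1 / 5 := by norm_num
  have hgeom : S * (1 - lam) ≤ 1 := by
    have := geom_sum_mul lam (m + 1)
    nlinarith [pow_nonneg (inv_nonneg.2 (by positivity : (0 : ℝ) ≤ q ^ k)) (m + 1)]
  have hdefect := h.abs_bonacciDefect_mul_le (q := q) (by omega) (by linarith)
  have hS : 0 ≤ S := sum_nonneg fun j _ => by positivity
  have hprod : |bonacciDefect k q| * (q - 1) * (S * (1 - lam)) * (q ^ N * (1 - N * d))
      ≤ d * 1 * qk ^ N :=
    mul_le_mul (mul_le_mul hdefect hgeom (by nlinarith) (abs_nonneg _)) hpow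
      (by nlinarith [pow_pos (by linarith : 0 < q) N]) (by positivity)
  have hP : 1 / 3 ≤ P := by
    have h1 : 2 / 5 ≤ (q - 1) * (1 - lam) := by nlinarith
    nlinarith
  have hlamN : lam ^ (m + 1) = (q ^ N)⁻¹ := by rw [inv_pow, ← pow_mul, mul_comm]
  rw [hlamN, ← mul_one (q ^ N)⁻¹, lt_inv_mul_iff₀ (by positivity)]
  refine lt_of_mul_lt_mul_right ?_ (by linarith : 0 ≤ P)
  calc q ^ N * (|bonacciDefect k q| * S) * P
      = |bonacciDefect k q| * (q - 1) * (S * (1 - lam)) * (q ^ N * (1 - N * d)) := by ring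
    _ ≤ d * 1 * qk ^ N := hprod
    _ < 1 * P := by linarith

end estimates

theorem orbit_layout {L R : ℕ → ℝ} {LQ RQ lam e u h : ℝ} {m : ℕ} (hlam : 0 < lam)
    (hL : ∀ i, L (i + 1) - L i = lam ^ i * e) (hLQ : LQ - L m = -(lam ^ m * h))
    (hRQ : RQ - L m = lam ^ m * u) (hR : ∀ i, R i - L i = lam ^ m * (u + h))
    (hh : lam - e ≤ h) (hu : lam + e ≤ u)
    (key : |e| * ∑ j ∈ range (m + 1), lam ^ j < lam ^ (m + 1)) :
    (0 < e →
      LQ < L 0 ∧ (∀ i < m, L i < L (i + 1)) ∧ L m < RQ ∧ RQ < R 0 ∧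
        ∀ i < m, R i < R (i + 1)) ∧
    (e = 0 →
      LQ < L 0 ∧ (∀ i < m, L i = L (i + 1)) ∧ L m < RQ ∧ RQ < R 0 ∧
        ∀ i < m, R i = R (i + 1)) ∧
    (e < 0 →
      LQ < L m ∧ (∀ i < m, L (i + 1) < L i) ∧ L 0 < RQ ∧ RQ < R m ∧
        ∀ i < m, R (i + 1) < R i) := by
  set S := ∑ j ∈ range m, lam ^ j
  have hLm : L m - L 0 = e * S := by
    rw [← sum_range_sub, mul_sum]
    exact sum_congr rfl fun i _ => by rw [hL, mul_comm]
  have hS : 0 ≤ S := sum_nonneg fun j _ => by positivity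
  have hlamm : 0 < lam ^ m := by positivity
  rw [sum_range_succ, pow_succ] at key
  have he : |e| < lam := by nlinarith [abs_nonneg e]
  have hh0 : 0 < h := by linarith [le_abs_self e]
  have hu0 : 0 < u := by linarith [neg_abs_le e]
  have hRL : ∀ i, R (i + 1) - R i = L (i + 1) - L i := fun i => by linarith [hR i, hR (i + 1)]
  have hb : 0 < lam ^ m * h := by positivity
  have ha : 0 < lam ^ m * u := by positivity
  refine ⟨fun hpos => ?_, fun hzero => ?_, fun hneg => ?_⟩
  · have hstep : ∀ i, L i < L (i + 1) := fun i => by nlinarith [hL i, pow_pos hlam i]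
    have hgap : e * S < lam ^ m * h := by rw [abs_of_pos hpos] at key; nlinarith
    refine ⟨by linarith, fun i _ => hstep i, by linarith, by linarith [hR 0],
      fun i _ => by linarith [hRL i, hstep i]⟩
  · have hstep : ∀ i, L (i + 1) = L i := fun i => by
      have := hL i; rw [hzero, mul_zero] at this; linarith
    rw [hzero, zero_mul] at hLm
    refine ⟨by linarith, fun i _ => (hstep i).symm, by linarith, by linarith [hR 0],
      fun i _ => by linarith [hRL i, hstep i]⟩
  · have hstep : ∀ i, L (i + 1) < L i := fun i => by nlinarith [hL i, pow_pos hlam i]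
    have hgap : -e * S < lam ^ m * u := by rw [abs_of_neg hneg] at key; nlinarith
    refine ⟨by linarith, fun i _ => hstep i, by linarith, by linarith [hR m],
      fun i _ => by linarith [hRL i, hstep i]⟩

theorem layout_of_endpoints_general
    (m k : ℕ) (hk : 4 ≤ k) (qk : ℝ) (hqk : IsBonacci k qk)
    (q : ℝ) (hq : q ∈ Set.Ioo (1 : ℝ) 2)
    (hclose : |q - qk| < qk ^ (-(((m : ℤ) + 2) * (k : ℤ)) - 3))
    (L R : ℕ → ℝ) (LQ RQ : ℝ)
    (hL : ∀ i, L i = (gMap q k)^[i] 1)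
    (hR : ∀ i, R i =
      (gMap q k)^[i] (1 + q ^ (-(((m : ℤ) - (i : ℤ)) * (k : ℤ))) * piQ q (seqG k)))
    (hLQ : LQ = (gMap q k)^[m] (piQ q (seqH k)))
    (hRQ : RQ = (gMap q k)^[m] (1 / (q - 1))) :
    (q < qk →
      LQ < L 0 ∧ (∀ i < m, L i < L (i + 1)) ∧ L m < RQ ∧ RQ < R 0 ∧
        ∀ i < m, R i < R (i + 1)) ∧
    (q = qk →
      LQ < L 0 ∧ (∀ i < m, L i = L (i + 1)) ∧ L m < RQ ∧ RQ < R 0 ∧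
        ∀ i < m, R i = R (i + 1)) ∧
    (qk < q →
      LQ < L m ∧ (∀ i < m, L (i + 1) < L i) ∧ L 0 < RQ ∧ RQ < R m ∧
        ∀ i < m, R (i + 1) < R i) := by
  obtain ⟨hq1, hq2⟩ := hq
  have hk1 : 1 ≤ k := by omega
  have hq0 : q ≠ 0 := by positivity
  have hclose' : |q - qk| < (qk ^ ((m + 1) * k))⁻¹ * (qk ^ (k + 3))⁻¹ := by
    convert hclose using 1
    rw [← mul_inv, ← pow_add, ← zpow_natCast, ← zpow_neg]
    congr 1; push_cast; ring
  have hq32 := hqk.three_halves_le hk hclose'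
  obtain ⟨hpos, hzero, hneg⟩ := orbit_layout (L := L) (R := R) (LQ := LQ) (RQ := RQ)
    (lam := (q ^ k)⁻¹) (e := bonacciDefect k q) (u := 1 / (q - 1) - 1) (h := 1 - piQ q (seqH k))
    (by positivity)
    (fun i => by rw [hL, hL, iterate_gMap_succ_one_sub hk1])
    (by rw [hLQ, hL, iterate_gMap_sub hk1]; ring)
    (by rw [hRQ, hL, iterate_gMap_sub hk1])
    (fun i => by
      rw [hR, hL, iterate_gMap_add_zpow_mul hq0 hk1, ← piQ_seqG_add_piQ_seqH hq1]; ring)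
    (by linarith [piQ_seqH_le hk hq32])
    (inv_pow_add_bonacciDefect_le hq1 hq2.le)
    (hqk.abs_bonacciDefect_mul_geom_sum_lt hk hq32 hclose')
  exact ⟨fun h => hpos (hqk.bonacciDefect_pos hk1 (by positivity) h),
    fun h => hzero (h ▸ hqk.bonacciDefect_eq_zero), fun h => hneg (hqk.bonacciDefect_neg hk1 h)⟩

theorem layout_of_endpoints
    (m k : ℕ) (hm : 1 ≤ m) (hk : 4 ≤ k) (qk : ℝ) (hqk : IsBonacci k qk)
    (q : ℝ) (hq : q ∈ Set.Ioo (1 : ℝ) 2)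
    (hclose : |q - qk| < qk ^ (-(((m : ℤ) + 2) * (k : ℤ)) - 3))
    (L R : ℕ → ℝ) (LQ RQ : ℝ)
    (hL : ∀ i, L i = (gMap q k)^[i] 1)
    (hR : ∀ i, R i =
      (gMap q k)^[i] (1 + q ^ (-(((m : ℤ) - (i : ℤ)) * (k : ℤ))) * piQ q (seqG k)))
    (hLQ : LQ = (gMap q k)^[m] (piQ q (seqH k)))
    (hRQ : RQ = (gMap q k)^[m] (1 / (q - 1))) :
    (q < qk →
      LQ < L 0 ∧ (∀ i < m, L i < L (i + 1)) ∧ L m < RQ ∧ RQ < R 0 ∧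
        ∀ i < m, R i < R (i + 1)) ∧
    (q = qk →
      LQ < L 0 ∧ (∀ i < m, L i = L (i + 1)) ∧ L m < RQ ∧ RQ < R 0 ∧
        ∀ i < m, R i = R (i + 1)) ∧
    (qk < q →
      LQ < L m ∧ (∀ i < m, L (i + 1) < L i) ∧ L 0 < RQ ∧ RQ < R m ∧
        ∀ i < m, R (i + 1) < R i) :=
  layout_of_endpoints_general m k hk qk hqk q hq hclose L R LQ RQ hL hR hLQ hRQ
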